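/- The subset {(a,v) ∈ [0,1] × [−2,2] : (a ≤ 1/2 and v ≤ 1) or (a ≥ 1/4 and v ≥ 0)} is a deformation retract of [0,1] × [−2,2]. -/
import Mathlib

open Set

noncomputable def l1 (z : ℝ × ℝ) : ℝ := max 1 (min ((1/2)/(z.1 + 1/4)) (2/(3 - z.2)))
noncomputable def pi1 (z : ℝ × ℝ) : ℝ × ℝ :=
  (-1/4 + l1 z * (z.1 + 1/4), 3 - l1 z * (3 - z.2))
noncomputable def l2 (z : ℝ × ℝ) : ℝ := max 1 (min ((3/4)/(5/4 - z.1)) (3/(z.2 + 3)))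
noncomputable def pi2 (z : ℝ × ℝ) : ℝ × ℝ :=
  (5/4 - l2 z * (5/4 - z.1), -3 + l2 z * (z.2 + 3))

-- pi1 = id when min ≤ 1
lemma pi1_id {z : ℝ × ℝ} (h : l1 z = 1) : pi1 z = z := by
  unfold pi1; rw [h]; exact Prod.ext (by ring) (by ring)

lemma pi2_id {z : ℝ × ℝ} (h : l2 z = 1) : pi2 z = z := by
  unfold pi2; rw [h]; exact Prod.ext (by ring) (by ring)

lemma l1_eq_one {z : ℝ × ℝ} (_h0 : 0 ≤ z.1) (h : 1/4 ≤ z.1 ∨ z.2 ≤ 1) : l1 z = 1 := by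
  apply max_eq_left
  rcases h with h | h
  · exact le_trans (min_le_left _ _) (by rw [div_le_one (by linarith)]; linarith)
  · exact le_trans (min_le_right _ _) (by rw [div_le_one (by linarith)]; linarith)

lemma l2_eq_one {z : ℝ × ℝ} (_h0 : z.1 ≤ 1) (h : z.1 ≤ 1/2 ∨ 0 ≤ z.2) : l2 z = 1 := by
  apply max_eq_left
  rcases h with h | h
  · exact le_trans (min_le_left _ _) (by rw [div_le_one (by linarith)]; linarith)
  · exact le_trans (min_le_right _ _) (by rw [div_le_one (by linarith)]; linarith)

/-- For `z` in the square, `pi1 z` is in the square and avoids the corner `{a<1/4, v>1}`. -/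
lemma pi1_spec {z : ℝ × ℝ} (h1 : 0 ≤ z.1) (h2 : z.1 ≤ 1) (h3 : -2 ≤ z.2) (h4 : z.2 ≤ 2) :
    0 ≤ (pi1 z).1 ∧ (pi1 z).1 ≤ 1 ∧ -2 ≤ (pi1 z).2 ∧ (pi1 z).2 ≤ 2 ∧
      (1/4 ≤ (pi1 z).1 ∨ (pi1 z).2 ≤ 1) := by
  by_cases hmin : min ((1/2)/(z.1 + 1/4)) (2/(3 - z.2)) ≤ 1
  · have h : l1 z = 1 := max_eq_left hmin
    rw [pi1_id h]
    refine ⟨h1, h2, h3, h4, ?_⟩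
    rcases min_le_iff.1 hmin with h | h
    · left; rw [div_le_one (by linarith)] at h; linarith
    · right; rw [div_le_one (by linarith)] at h; linarith
  · push_neg at hmin
    have h : l1 z = min ((1/2)/(z.1 + 1/4)) (2/(3 - z.2)) := max_eq_right hmin.le
    have hd1 : (0:ℝ) < z.1 + 1/4 := by linarith
    have hd2 : (0:ℝ) < 3 - z.2 := by linarith
    have hla : l1 z ≤ (1/2)/(z.1 + 1/4) := h ▸ min_le_left _ _
    have hlb : l1 z ≤ 2/(3 - z.2) := h ▸ min_le_right _ _
    have hl1 : 1 ≤ l1 z := le_max_left _ _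
    have ha : l1 z * (z.1 + 1/4) ≤ 1/2 := by
      calc l1 z * (z.1 + 1/4) ≤ (1/2)/(z.1+1/4) * (z.1+1/4) := by nlinarith
      _ = 1/2 := div_mul_cancel₀ _ (ne_of_gt hd1)
    have hb : l1 z * (3 - z.2) ≤ 2 := by
      calc l1 z * (3 - z.2) ≤ 2/(3-z.2) * (3-z.2) := by nlinarith
      _ = 2 := div_mul_cancel₀ _ (ne_of_gt hd2)
    have ha' : z.1 + 1/4 ≤ l1 z * (z.1 + 1/4) := by nlinarith
    have hb' : 3 - z.2 ≤ l1 z * (3 - z.2) := by nlinarith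
    unfold pi1
    refine ⟨by dsimp; linarith, by dsimp; linarith, by dsimp; linarith, by dsimp; linarith, ?_⟩
    rcases min_choice ((1/2)/(z.1 + 1/4)) (2/(3 - z.2)) with hc | hc
    · left; dsimp
      have : l1 z * (z.1 + 1/4) = 1/2 := by rw [h, hc]; exact div_mul_cancel₀ _ (ne_of_gt hd1)
      linarith
    · right; dsimp
      have : l1 z * (3 - z.2) = 2 := by rw [h, hc]; exact div_mul_cancel₀ _ (ne_of_gt hd2)
      linarith

/-- For `w` in the square avoiding the first corner, `pi2 w` is in the square and in `A`. -/
lemma pi2_spec {w : ℝ × ℝ} (h1 : 0 ≤ w.1) (h2 : w.1 ≤ 1) (h3 : -2 ≤ w.2) (h4 : w.2 ≤ 2)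
    (h5 : 1/4 ≤ w.1 ∨ w.2 ≤ 1) :
    0 ≤ (pi2 w).1 ∧ (pi2 w).1 ≤ 1 ∧ -2 ≤ (pi2 w).2 ∧ (pi2 w).2 ≤ 2 ∧
      (((pi2 w).1 ≤ 1/2 ∧ (pi2 w).2 ≤ 1) ∨ (1/4 ≤ (pi2 w).1 ∧ 0 ≤ (pi2 w).2)) := by
  by_cases hmin : min ((3/4)/(5/4 - w.1)) (3/(w.2 + 3)) ≤ 1
  · have h : l2 w = 1 := max_eq_left hmin
    rw [pi2_id h]
    refine ⟨h1, h2, h3, h4, ?_⟩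
    have h6 : w.1 ≤ 1/2 ∨ 0 ≤ w.2 := by
      rcases min_le_iff.1 hmin with h | h
      · left; rw [div_le_one (by linarith)] at h; linarith
      · right; rw [div_le_one (by linarith)] at h; linarith
    -- case analysis: w avoids both corners, so w ∈ A
    by_cases hv1 : w.2 ≤ 1
    · by_cases ha : w.1 ≤ 1/2
      · exact Or.inl ⟨ha, hv1⟩
      · rcases h6 with h6 | h6
        · exact absurd h6 ha
        · exact Or.inr ⟨by linarith, h6⟩
    · rcases h5 with h5 | h5
      · exact Or.inr ⟨h5, by linarith⟩
      · exact absurd h5 hv1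
  · push_neg at hmin
    have h : l2 w = min ((3/4)/(5/4 - w.1)) (3/(w.2 + 3)) := max_eq_right hmin.le
    have hd1 : (0:ℝ) < 5/4 - w.1 := by linarith
    have hd2 : (0:ℝ) < w.2 + 3 := by linarith
    have hla : l2 w ≤ (3/4)/(5/4 - w.1) := h ▸ min_le_left _ _
    have hlb : l2 w ≤ 3/(w.2 + 3) := h ▸ min_le_right _ _
    have hl1 : 1 ≤ l2 w := le_max_left _ _
    have ha : l2 w * (5/4 - w.1) ≤ 3/4 := by
      calc l2 w * (5/4 - w.1) ≤ (3/4)/(5/4 - w.1) * (5/4 - w.1) := by nlinarith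
      _ = 3/4 := div_mul_cancel₀ _ (ne_of_gt hd1)
    have hb : l2 w * (w.2 + 3) ≤ 3 := by
      calc l2 w * (w.2 + 3) ≤ 3/(w.2+3) * (w.2+3) := by nlinarith
      _ = 3 := div_mul_cancel₀ _ (ne_of_gt hd2)
    have ha' : 5/4 - w.1 ≤ l2 w * (5/4 - w.1) := by nlinarith
    have hb' : w.2 + 3 ≤ l2 w * (w.2 + 3) := by nlinarith
    unfold pi2
    refine ⟨by dsimp; linarith, by dsimp; linarith, by dsimp; linarith, by dsimp; linarith, ?_⟩
    rcases min_choice ((3/4)/(5/4 - w.1)) (3/(w.2 + 3)) with hc | hc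
    · left; dsimp
      have : l2 w * (5/4 - w.1) = 3/4 := by rw [h, hc]; exact div_mul_cancel₀ _ (ne_of_gt hd1)
      constructor <;> linarith
    · right; dsimp
      have : l2 w * (w.2 + 3) = 3 := by rw [h, hc]; exact div_mul_cancel₀ _ (ne_of_gt hd2)
      constructor <;> linarith

/-- One-dimensional model of the smoothing retraction: the subset
`{(a,v) ∈ [0,1] × [−2,2] : (a ≤ 1/2 ∧ v ≤ 1) ∨ (a ≥ 1/4 ∧ v ≥ 0)}` is a deformation
retract of `[0,1] × [−2,2]`. -/
theorem stmt13 :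
    ∃ H : ℝ → ℝ × ℝ → ℝ × ℝ,
      ContinuousOn (fun q : ℝ × (ℝ × ℝ) => H q.1 q.2)
        (Icc 0 1 ×ˢ (Icc 0 1 ×ˢ Icc (-2) 2)) ∧
      (∀ z ∈ Icc (0:ℝ) 1 ×ˢ Icc (-2:ℝ) 2, H 0 z = z) ∧
      (∀ z ∈ Icc (0:ℝ) 1 ×ˢ Icc (-2:ℝ) 2,
        H 1 z ∈ {q : ℝ × ℝ | q ∈ Icc (0:ℝ) 1 ×ˢ Icc (-2:ℝ) 2 ∧
          ((q.1 ≤ 1/2 ∧ q.2 ≤ 1) ∨ (1/4 ≤ q.1 ∧ 0 ≤ q.2))}) ∧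
      (∀ t ∈ Icc (0:ℝ) 1,
        ∀ a ∈ {q : ℝ × ℝ | q ∈ Icc (0:ℝ) 1 ×ˢ Icc (-2:ℝ) 2 ∧
          ((q.1 ≤ 1/2 ∧ q.2 ≤ 1) ∨ (1/4 ≤ q.1 ∧ 0 ≤ q.2))}, H t a = a) ∧
      (∀ t ∈ Icc (0:ℝ) 1, ∀ z ∈ Icc (0:ℝ) 1 ×ˢ Icc (-2:ℝ) 2,
        H t z ∈ Icc (0:ℝ) 1 ×ˢ Icc (-2:ℝ) 2) := by
  refine ⟨fun t z => (z.1 + t * ((pi2 (pi1 z)).1 - z.1), z.2 + t * ((pi2 (pi1 z)).2 - z.2)),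
    ?_, ?_, ?_, ?_, ?_⟩
  · -- continuity
    have hpi1 : ContinuousOn pi1 (Icc (0:ℝ) 1 ×ˢ Icc (-2:ℝ) 2) := by
      have hl : ContinuousOn l1 (Icc (0:ℝ) 1 ×ˢ Icc (-2:ℝ) 2) := by
        unfold l1
        apply ContinuousOn.sup continuousOn_const
        apply ContinuousOn.inf
        · exact ContinuousOn.div continuousOn_const (by fun_prop)
            (fun z hz => by have := hz.1.1; dsimp; intro hc; linarith)
        · exact ContinuousOn.div continuousOn_const (by fun_prop)
            (fun z hz => by have := hz.2.2; dsimp; intro hc; linarith)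
      unfold pi1
      exact ContinuousOn.prodMk
        (ContinuousOn.add continuousOn_const (hl.mul (by fun_prop)))
        (ContinuousOn.sub continuousOn_const (hl.mul (by fun_prop)))
    have hpi2 : ContinuousOn pi2 (Icc (0:ℝ) 1 ×ˢ Icc (-2:ℝ) 2) := by
      have hl : ContinuousOn l2 (Icc (0:ℝ) 1 ×ˢ Icc (-2:ℝ) 2) := by
        unfold l2
        apply ContinuousOn.sup continuousOn_const
        apply ContinuousOn.inf
        · exact ContinuousOn.div continuousOn_const (by fun_prop)
            (fun z hz => by have := hz.1.2; dsimp; intro hc; linarith)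
        · exact ContinuousOn.div continuousOn_const (by fun_prop)
            (fun z hz => by have := hz.2.1; dsimp; intro hc; linarith)
      unfold pi2
      exact ContinuousOn.prodMk
        (ContinuousOn.sub continuousOn_const (hl.mul (by fun_prop)))
        (ContinuousOn.add continuousOn_const (hl.mul (by fun_prop)))
    have hmaps : MapsTo pi1 (Icc (0:ℝ) 1 ×ˢ Icc (-2:ℝ) 2) (Icc (0:ℝ) 1 ×ˢ Icc (-2:ℝ) 2) := by
      intro z hz
      obtain ⟨a, b, c, d, _⟩ := pi1_spec hz.1.1 hz.1.2 hz.2.1 hz.2.2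
      exact ⟨⟨a, b⟩, ⟨c, d⟩⟩
    have hpi : ContinuousOn (fun z => pi2 (pi1 z)) (Icc (0:ℝ) 1 ×ˢ Icc (-2:ℝ) 2) :=
      hpi2.comp hpi1 hmaps
    have hsnd : MapsTo (fun q : ℝ × (ℝ × ℝ) => q.2)
        (Icc (0:ℝ) 1 ×ˢ (Icc (0:ℝ) 1 ×ˢ Icc (-2:ℝ) 2)) (Icc (0:ℝ) 1 ×ˢ Icc (-2:ℝ) 2) :=
      fun q hq => hq.2
    have hpiq : ContinuousOn (fun q : ℝ × (ℝ × ℝ) => pi2 (pi1 q.2))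
        (Icc (0:ℝ) 1 ×ˢ (Icc (0:ℝ) 1 ×ˢ Icc (-2:ℝ) 2)) :=
      hpi.comp continuous_snd.continuousOn hsnd
    have hfst : ContinuousOn (fun q : ℝ × (ℝ × ℝ) => (pi2 (pi1 q.2)).1)
        (Icc (0:ℝ) 1 ×ˢ (Icc (0:ℝ) 1 ×ˢ Icc (-2:ℝ) 2)) :=
      continuous_fst.comp_continuousOn hpiq
    have hsnd' : ContinuousOn (fun q : ℝ × (ℝ × ℝ) => (pi2 (pi1 q.2)).2)
        (Icc (0:ℝ) 1 ×ˢ (Icc (0:ℝ) 1 ×ˢ Icc (-2:ℝ) 2)) :=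
      continuous_snd.comp_continuousOn hpiq
    apply ContinuousOn.prodMk
    · apply ContinuousOn.add (by fun_prop)
      exact ContinuousOn.mul (by fun_prop) (hfst.sub (by fun_prop))
    · apply ContinuousOn.add (by fun_prop)
      exact ContinuousOn.mul (by fun_prop) (hsnd'.sub (by fun_prop))
  · -- H 0 = id
    intro z _; exact Prod.ext (by dsimp; ring) (by dsimp; ring)
  · -- H 1 lands in A
    intro z hz
    obtain ⟨a1, a2, a3, a4, a5⟩ := pi1_spec hz.1.1 hz.1.2 hz.2.1 hz.2.2
    obtain ⟨b1, b2, b3, b4, b5⟩ := pi2_spec a1 a2 a3 a4 a5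
    dsimp only
    rw [show (z.1 + 1 * ((pi2 (pi1 z)).1 - z.1), z.2 + 1 * ((pi2 (pi1 z)).2 - z.2))
        = pi2 (pi1 z) from Prod.ext (by dsimp; ring) (by dsimp; ring)]
    exact ⟨⟨⟨b1, b2⟩, b3, b4⟩, b5⟩
  · -- fixes A
    intro t _ a ha
    obtain ⟨⟨⟨h1, h2⟩, h3, h4⟩, hA⟩ := ha
    have hl1 : l1 a = 1 := l1_eq_one h1 (by rcases hA with ⟨_, h⟩ | ⟨h, _⟩ <;> [right; left] <;> exact h)
    have hl2 : l2 a = 1 := l2_eq_one h2 (by rcases hA with ⟨h, _⟩ | ⟨_, h⟩ <;> [left; right] <;> exact h)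
    dsimp only
    rw [pi1_id hl1, pi2_id hl2]
    exact Prod.ext (by dsimp; ring) (by dsimp; ring)
  · -- stays in square
    intro t ht z hz
    obtain ⟨a1, a2, a3, a4, a5⟩ := pi1_spec hz.1.1 hz.1.2 hz.2.1 hz.2.2
    obtain ⟨b1, b2, b3, b4, _⟩ := pi2_spec a1 a2 a3 a4 a5
    obtain ⟨ht0, ht1⟩ := ht
    obtain ⟨⟨c1, c2⟩, c3, c4⟩ := hz
    constructor
    · constructor <;> dsimp <;> nlinarith
    · constructor <;> dsimp <;> nlinarith
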